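/- For a network of opponent-coordinating agents at equilibrium with x(0) ≠ all-B, the infimum uniform reward r₀* such that every reward r₀ > r₀* drives the network to the all-A state belongs to the finite candidate set ℛ = { (y_i^B − y_j^A)/deg_j : y_i^B ∈ Π_i^B, y_j^A ∈ Π_j^A, j ∈ N_s, i ∈ N_s ∪ {s}, x_i(0) = B, s ∈ V, x_s(0) = B } ∪ {0}. -/
import Mathlib


open Finset

/-- Total payoff of agent `i` at state `x` (`true` = A, `false` = B). -/
noncomputable def pay {n : ℕ} (G : SimpleGraph (Fin n)) [DecidableRel G.Adj]
    (a b c d : Fin n → ℝ) (x : Fin n → Bool) (i : Fin n) : ℝ :=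
  ∑ j ∈ G.neighborFinset i,
    (if x i then (if x j then a i else b i) else (if x j then c i else d i))

/-- Closed neighborhood of `i`. -/
def cn {n : ℕ} (G : SimpleGraph (Fin n)) [DecidableRel G.Adj] (i : Fin n) : Finset (Fin n) :=
  insert i (G.neighborFinset i)

/-- The set of strategies earning maximal payoff `u` in the closed neighborhood of `i`. -/
def SMset {n : ℕ} (G : SimpleGraph (Fin n)) [DecidableRel G.Adj]
    (u : Fin n → ℝ) (x : Fin n → Bool) (i : Fin n) : Set Bool :=
  {s | ∃ j ∈ cn G i, x j = s ∧ ∀ r ∈ cn G i, u r ≤ u j}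

open Classical in
/-- Imitation update: adopt the strategy of the highest earner in the closed
neighborhood; keep the current strategy on ties. -/
noncomputable def imNext {n : ℕ} (G : SimpleGraph (Fin n)) [DecidableRel G.Adj]
    (u : Fin n → ℝ) (x : Fin n → Bool) (i : Fin n) : Bool :=
  if SMset G u x i = {true} then true
  else if SMset G u x i = {false} then false
  else x i

/-- Opponent-coordinating payoff matrices: `a i > b i` and `d i > c i`. -/
def OppCoord {n : ℕ} (a b c d : Fin n → ℝ) : Prop := ∀ i, b i < a i ∧ c i < d i

/-- Payoffs when a uniform reward `r` is given for each game played with strategy A. -/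
noncomputable def payR {n : ℕ} (G : SimpleGraph (Fin n)) [DecidableRel G.Adj]
    (a b c d : Fin n → ℝ) (r : ℝ) (x : Fin n → Bool) (i : Fin n) : ℝ :=
  pay G a b c d x i + (if x i then r * (G.degree i : ℝ) else 0)

/-- Asynchronous imitation trajectory under uniform reward `r`. -/
def ImTraj {n : ℕ} (G : SimpleGraph (Fin n)) [DecidableRel G.Adj]
    (a b c d : Fin n → ℝ) (r : ℝ) (σ : ℕ → Fin n) (x : ℕ → Fin n → Bool) : Prop :=
  ∀ k j, x (k + 1) j = if j = σ k then imNext G (payR G a b c d r (x k)) (x k) j else x k j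

def ImEquilib {n : ℕ} (G : SimpleGraph (Fin n)) [DecidableRel G.Adj]
    (a b c d : Fin n → ℝ) (x : Fin n → Bool) : Prop :=
  ∀ i, imNext G (pay G a b c d x) x i = x i

/-- Number of neighbors of `i` playing A at state `x0`. -/
def nA {n : ℕ} (G : SimpleGraph (Fin n)) [DecidableRel G.Adj]
    (x0 : Fin n → Bool) (i : Fin n) : ℕ :=
  ((G.neighborFinset i).filter (fun j => x0 j = true)).card

/-- Possible payoffs of agent `i` while playing A, given no A→B switches. -/
def PiA {n : ℕ} (G : SimpleGraph (Fin n)) [DecidableRel G.Adj]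
    (a b : Fin n → ℝ) (x0 : Fin n → Bool) (i : Fin n) : Set ℝ :=
  {v | ∃ δ : ℕ, δ ≤ G.degree i - nA G x0 i ∧
    v = a i * ((nA G x0 i + δ : ℕ) : ℝ) + b i * ((G.degree i - nA G x0 i - δ : ℕ) : ℝ)}

/-- Possible payoffs of agent `i` while playing B, given no A→B switches. -/
def PiB {n : ℕ} (G : SimpleGraph (Fin n)) [DecidableRel G.Adj]
    (c d : Fin n → ℝ) (x0 : Fin n → Bool) (i : Fin n) : Set ℝ :=
  {v | ∃ δ : ℕ, δ ≤ G.degree i - nA G x0 i ∧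
    v = c i * ((nA G x0 i + δ : ℕ) : ℝ) + d i * ((G.degree i - nA G x0 i - δ : ℕ) : ℝ)}


/-- Every agent activates infinitely often. -/
def InfAct {n : ℕ} (σ : ℕ → Fin n) : Prop := ∀ i k, ∃ k', k ≤ k' ∧ σ k' = i


section Aux

variable {n : ℕ} (G : SimpleGraph (Fin n)) [DecidableRel G.Adj]
  (a b c d : Fin n → ℝ) (x0 : Fin n → Bool)

/-- Pointwise domination of strategy profiles (A-set grows). -/
def BLe {n : ℕ} (y y' : Fin n → Bool) : Prop := ∀ i, y i = true → y' i = true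

lemma mem_cn_self (i : Fin n) : i ∈ cn G i := Finset.mem_insert_self _ _

lemma nA_le_degree (y : Fin n → Bool) (i : Fin n) : nA G y i ≤ G.degree i :=
  Finset.card_filter_le _ _

lemma nA_mono {y y' : Fin n → Bool} (h : BLe y y') (i : Fin n) :
    nA G y i ≤ nA G y' i := by
  apply Finset.card_le_card
  intro j hj
  rw [Finset.mem_filter] at hj ⊢
  exact ⟨hj.1, h j hj.2⟩

lemma pay_eq_A {y : Fin n → Bool} {i : Fin n} (h : y i = true) :
    pay G a b c d y i
      = a i * (nA G y i : ℝ) + b i * ((G.degree i : ℝ) - (nA G y i : ℝ)) := by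
  classical
  have hsplit : ((G.neighborFinset i).filter (fun j => y j = true)).card
      + ((G.neighborFinset i).filter (fun j => ¬ (y j = true))).card
      = G.degree i := by
    rw [Finset.card_filter_add_card_filter_not]
    rfl
  have hle := nA_le_degree G y i
  unfold pay
  simp only [h, if_true]
  rw [Finset.sum_ite]
  simp only [Finset.sum_const, nsmul_eq_mul]
  unfold nA at hle ⊢
  have h2 : (((G.neighborFinset i).filter (fun j => ¬ (y j = true))).card : ℝ)
      = (G.degree i : ℝ) - (((G.neighborFinset i).filter (fun j => y j = true)).card : ℝ) := by
    have := hsplit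
    push_cast [← this]
    ring
  rw [h2]
  ring

lemma pay_eq_B {y : Fin n → Bool} {i : Fin n} (h : y i = false) :
    pay G a b c d y i
      = c i * (nA G y i : ℝ) + d i * ((G.degree i : ℝ) - (nA G y i : ℝ)) := by
  classical
  have hsplit : ((G.neighborFinset i).filter (fun j => y j = true)).card
      + ((G.neighborFinset i).filter (fun j => ¬ (y j = true))).card
      = G.degree i := by
    rw [Finset.card_filter_add_card_filter_not]
    rfl
  unfold pay
  simp only [h, if_false, Bool.false_eq_true]
  rw [Finset.sum_ite]
  simp only [Finset.sum_const, nsmul_eq_mul]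
  unfold nA
  have h2 : (((G.neighborFinset i).filter (fun j => ¬ (y j = true))).card : ℝ)
      = (G.degree i : ℝ) - (((G.neighborFinset i).filter (fun j => y j = true)).card : ℝ) := by
    push_cast [← hsplit]
    ring
  rw [h2]
  ring

lemma pay_mono_A (hopp : OppCoord a b c d) {y y' : Fin n → Bool} (h : BLe y y')
    {i : Fin n} (hA : y i = true) :
    pay G a b c d y i ≤ pay G a b c d y' i := by
  rw [pay_eq_A G a b c d hA, pay_eq_A G a b c d (h i hA)]
  have h1 : (nA G y i : ℝ) ≤ (nA G y' i : ℝ) := Nat.cast_le.2 (nA_mono G h i)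
  have h2 := (hopp i).1
  nlinarith

lemma pay_anti_B (hopp : OppCoord a b c d) {y y' : Fin n → Bool} (h : BLe y y')
    {i : Fin n} (hB' : y' i = false) :
    pay G a b c d y' i ≤ pay G a b c d y i := by
  have hB : y i = false := by
    cases hy : y i
    · rfl
    · rw [h i hy] at hB'; cases hB'
  rw [pay_eq_B G a b c d hB, pay_eq_B G a b c d hB']
  have h1 : (nA G y i : ℝ) ≤ (nA G y' i : ℝ) := Nat.cast_le.2 (nA_mono G h i)
  have h2 := (hopp i).2
  nlinarith

lemma payR_B {r : ℝ} {y : Fin n → Bool} {i : Fin n} (h : y i = false) :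
    payR G a b c d r y i = pay G a b c d y i := by
  unfold payR
  simp [h]

lemma payR_A {r : ℝ} {y : Fin n → Bool} {i : Fin n} (h : y i = true) :
    payR G a b c d r y i = pay G a b c d y i + r * (G.degree i : ℝ) := by
  unfold payR
  simp [h]

lemma pay_mem_PiA {y : Fin n → Bool} (h0 : BLe x0 y) {j : Fin n} (hA : y j = true) :
    pay G a b c d y j ∈ PiA G a b x0 j := by
  have h1 := nA_mono G h0 j
  have h2 := nA_le_degree G y j
  refine ⟨nA G y j - nA G x0 j, by omega, ?_⟩
  have e1 : nA G x0 j + (nA G y j - nA G x0 j) = nA G y j := by omega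
  have e2 : G.degree j - nA G x0 j - (nA G y j - nA G x0 j) = G.degree j - nA G y j := by
    omega
  rw [e1, e2, pay_eq_A G a b c d hA]
  have e3 : ((G.degree j - nA G y j : ℕ) : ℝ) = (G.degree j : ℝ) - (nA G y j : ℝ) := by
    push_cast [Nat.cast_sub h2]
    ring
  rw [e3]

lemma pay_mem_PiB {y : Fin n → Bool} (h0 : BLe x0 y) {j : Fin n} (hB : y j = false)
    (hB0 : x0 j = false) :
    pay G a b c d y j ∈ PiB G c d x0 j := by
  have h1 := nA_mono G h0 j
  have h2 := nA_le_degree G y j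
  refine ⟨nA G y j - nA G x0 j, by omega, ?_⟩
  have e1 : nA G x0 j + (nA G y j - nA G x0 j) = nA G y j := by omega
  have e2 : G.degree j - nA G x0 j - (nA G y j - nA G x0 j) = G.degree j - nA G y j := by
    omega
  rw [e1, e2, pay_eq_B G a b c d hB]
  have e3 : ((G.degree j - nA G y j : ℕ) : ℝ) = (G.degree j : ℝ) - (nA G y j : ℝ) := by
    push_cast [Nat.cast_sub h2]
    ring
  rw [e3]

lemma smset_exists_mem (u : Fin n → ℝ) (y : Fin n → Bool) (i : Fin n) :
    ∃ j ∈ cn G i, (y j ∈ SMset G u y i) ∧ ∀ p ∈ cn G i, u p ≤ u j := by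
  obtain ⟨j, hj, hmax⟩ := Finset.exists_max_image (cn G i) u ⟨i, mem_cn_self G i⟩
  exact ⟨j, hj, ⟨j, hj, rfl, hmax⟩, hmax⟩

lemma true_mem_smset {u : Fin n → ℝ} {y : Fin n → Bool} {i : Fin n}
    (hne : SMset G u y i ≠ {false}) : true ∈ SMset G u y i := by
  obtain ⟨j, hj, hmem, hmax⟩ := smset_exists_mem G u y i
  cases hyj : y j
  · rw [hyj] at hmem
    by_contra ht
    apply hne
    apply Set.eq_singleton_iff_unique_mem.2
    refine ⟨hmem, ?_⟩
    intro s hs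
    cases s
    · rfl
    · exact absurd hs ht
  · rw [hyj] at hmem
    exact hmem

lemma imNext_A {u : Fin n → ℝ} {y : Fin n → Bool} {i : Fin n} (hA : y i = true)
    (hw : ∃ j ∈ cn G i, y j = true ∧ ∀ p ∈ cn G i, y p = false → u p ≤ u j) :
    imNext G u y i = true := by
  obtain ⟨j, hj, hjA, hdom⟩ := hw
  have hne : SMset G u y i ≠ {false} := by
    intro hS
    obtain ⟨m, hm, hmem, hmax⟩ := smset_exists_mem G u y i
    have htrue : true ∈ SMset G u y i := by
      cases hym : y m
      · have h1 : u m ≤ u j := hdom m hm hym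
        exact ⟨j, hj, hjA, fun p hp => (hmax p hp).trans h1⟩
      · rw [hym] at hmem
        exact hmem
    rw [hS] at htrue
    simp at htrue
  unfold imNext
  by_cases hT : SMset G u y i = {true}
  · rw [if_pos hT]
  · rw [if_neg hT, if_neg hne, hA]

lemma imNext_B_iff {u : Fin n → ℝ} {y : Fin n → Bool} {i : Fin n} (hB : y i = false) :
    imNext G u y i = true ↔ SMset G u y i = {true} := by
  unfold imNext
  by_cases hT : SMset G u y i = {true}
  · simp [hT]
  · rw [if_neg hT]
    by_cases hF : SMset G u y i = {false}
    · simp [hF, hT]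
    · simp [hF, hB, hT]

lemma smset_true_iff {u : Fin n → ℝ} {y : Fin n → Bool} {i : Fin n} (hB : y i = false) :
    SMset G u y i = {true}
      ↔ ∃ j ∈ cn G i, y j = true ∧ ∀ q ∈ cn G i, y q = false → u q < u j := by
  constructor
  · intro hS
    have ht : true ∈ SMset G u y i := by rw [hS]; exact rfl
    obtain ⟨j, hj, hjA, hmax⟩ := ht
    refine ⟨j, hj, hjA, fun q hq hqB => ?_⟩
    rcases lt_or_eq_of_le (hmax q hq) with hlt | heqq
    · exact hlt
    · exfalso
      have hf : false ∈ SMset G u y i :=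
        ⟨q, hq, hqB, fun p hp => (hmax p hp).trans heqq.symm.le⟩
      rw [hS] at hf
      simp at hf
  · rintro ⟨j, hj, hjA, hstrict⟩
    apply Set.eq_singleton_iff_unique_mem.2
    constructor
    · obtain ⟨m, hm, hmem, hmax⟩ := smset_exists_mem G u y i
      cases hym : y m
      · exact absurd (hmax j hj) (not_le.2 (hstrict m hm hym))
      · rw [hym] at hmem
        exact hmem
    · rintro s ⟨q, hq, hqs, hmax⟩
      cases hs : s
      · exfalso
        rw [hs] at hqs
        exact absurd (hmax j hj) (not_le.2 (hstrict q hq hqs))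
      · rfl

/-- The invariant maintained along trajectories. -/
def InvP {n : ℕ} (G : SimpleGraph (Fin n)) [DecidableRel G.Adj]
    (a b c d : Fin n → ℝ) (x0 : Fin n → Bool) (r : ℝ) (y : Fin n → Bool) : Prop :=
  (∀ i, x0 i = true → y i = true) ∧
  ∀ i, y i = true → ∃ j ∈ cn G i, y j = true ∧
    ∀ p ∈ cn G i, y p = false → payR G a b c d r y p ≤ payR G a b c d r y j

lemma inv_base {r : ℝ} (hr : 0 ≤ r) (heq : ImEquilib G a b c d x0) :
    InvP G a b c d x0 r x0 := by
  refine ⟨fun i h => h, fun i hA => ?_⟩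
  have h2 := heq i
  rw [hA] at h2
  have hne : SMset G (pay G a b c d x0) x0 i ≠ {false} := by
    intro hS
    unfold imNext at h2
    rw [hS] at h2
    simp at h2
  obtain ⟨j, hj, hjA, hmax⟩ := true_mem_smset G hne
  refine ⟨j, hj, hjA, fun p hp hpB => ?_⟩
  rw [payR_B G a b c d hpB, payR_A G a b c d hjA]
  have h3 := hmax p hp
  have h4 : 0 ≤ r * (G.degree j : ℝ) := mul_nonneg hr (Nat.cast_nonneg _)
  linarith

lemma inv_step (hopp : OppCoord a b c d) {r : ℝ} (hr : 0 ≤ r) {y : Fin n → Bool}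
    (hI : InvP G a b c d x0 r y) (p : Fin n) :
    InvP G a b c d x0 r
      (fun i => if i = p then imNext G (payR G a b c d r y) y i else y i) := by
  by_cases hyp : y p = true
  · have hstay : imNext G (payR G a b c d r y) y p = true :=
      imNext_A G hyp (hI.2 p hyp)
    have hy' : (fun i => if i = p then imNext G (payR G a b c d r y) y i else y i) = y := by
      funext i
      by_cases h : i = p
      · subst h; rw [if_pos rfl, hstay, hyp]
      · rw [if_neg h]
    rw [hy']
    exact hI
  · have hypf : y p = false := by cases h : y p; rfl; exact absurd h hyp
    by_cases hflip : imNext G (payR G a b c d r y) y p = true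
    · have hS : SMset G (payR G a b c d r y) y p = {true} :=
        (imNext_B_iff G hypf).1 hflip
      have ht : true ∈ SMset G (payR G a b c d r y) y p := by rw [hS]; exact rfl
      obtain ⟨j, hj, hjA, hmax⟩ := ht
      have hy'eq : (fun i => if i = p then imNext G (payR G a b c d r y) y i else y i)
          = (fun i => if i = p then true else y i) := by
        funext i
        by_cases h : i = p
        · subst h; rw [if_pos rfl, if_pos rfl, hflip]
        · rw [if_neg h, if_neg h]
      rw [hy'eq]
      set y' : Fin n → Bool := fun i => if i = p then true else y i with hy'def
      have hle : BLe y y' := by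
        intro i hi
        by_cases h : i = p
        · simp [hy'def, h]
        · simp [hy'def, h, hi]
      have hBtoB : ∀ w, y' w = false → y w = false := by
        intro w hw
        by_cases h : w = p
        · exfalso; rw [hy'def] at hw; simp [h] at hw
        · rw [hy'def] at hw; simpa [h] using hw
      have hAup : ∀ w, y w = true →
          payR G a b c d r y w ≤ payR G a b c d r y' w := by
        intro w hw
        rw [payR_A G a b c d hw, payR_A G a b c d (hle w hw)]
        have := pay_mono_A G a b c d hopp hle hw
        linarith
      have hBdown : ∀ w, y' w = false →
          payR G a b c d r y' w ≤ payR G a b c d r y w := by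
        intro w hw
        rw [payR_B G a b c d hw, payR_B G a b c d (hBtoB w hw)]
        exact pay_anti_B G a b c d hopp hle hw
      refine ⟨fun i h => hle i (hI.1 i h), fun i hA' => ?_⟩
      by_cases hiy : y i = true
      · obtain ⟨j0, hj0, hj0A, hdom⟩ := hI.2 i hiy
        refine ⟨j0, hj0, hle j0 hj0A, fun q hq hqB => ?_⟩
        exact (hBdown q hqB).trans ((hdom q hq (hBtoB q hqB)).trans (hAup j0 hj0A))
      · have hip : i = p := by
          by_contra h
          rw [hy'def] at hA'
          simp only [if_neg h] at hA'
          exact hiy hA'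
        subst hip
        refine ⟨j, hj, hle j hjA, fun q hq hqB => ?_⟩
        exact (hBdown q hqB).trans ((hmax q hq).trans (hAup j hjA))
    · have hstay : imNext G (payR G a b c d r y) y p = false := by
        cases h : imNext G (payR G a b c d r y) y p
        · rfl
        · exact absurd h hflip
      have hy' : (fun i => if i = p then imNext G (payR G a b c d r y) y i else y i) = y := by
        funext i
        by_cases h : i = p
        · subst h; rw [if_pos rfl, hstay, hypf]
        · rw [if_neg h]
      rw [hy']
      exact hI

lemma inv_prefix (hopp : OppCoord a b c d) {r : ℝ} (hr : 0 ≤ r)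
    (heq : ImEquilib G a b c d x0) (σ : ℕ → Fin n) (x : ℕ → Fin n → Bool)
    (hx0 : x 0 = x0) :
    ∀ k, (∀ k' < k, ∀ j, x (k' + 1) j
        = if j = σ k' then imNext G (payR G a b c d r (x k')) (x k') j else x k' j) →
      InvP G a b c d x0 r (x k) := by
  intro k
  induction k with
  | zero => intro _; rw [hx0]; exact inv_base G a b c d x0 hr heq
  | succ k ih =>
    intro hsteps
    have hIk := ih (fun k' hk' => hsteps k' (Nat.lt_succ_of_lt hk'))
    have hx : x (k + 1)
        = fun i => if i = σ k then imNext G (payR G a b c d r (x k)) (x k) i else x k i :=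
      funext (hsteps k (Nat.lt_succ_self k))
    rw [hx]
    exact inv_step G a b c d x0 hopp hr hIk (σ k)

/-- The candidate set from the statement. -/
def Rcand {n : ℕ} (G : SimpleGraph (Fin n)) [DecidableRel G.Adj]
    (a b c d : Fin n → ℝ) (x0 : Fin n → Bool) : Set ℝ :=
  {v : ℝ | ∃ s : Fin n, x0 s = false ∧
    ∃ j ∈ G.neighborFinset s, ∃ i ∈ cn G s, x0 i = false ∧
      ∃ yB ∈ PiB G c d x0 i, ∃ yA ∈ PiA G a b x0 j,
        v = (yB - yA) / (G.degree j : ℝ)}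

def Ccand {n : ℕ} (G : SimpleGraph (Fin n)) [DecidableRel G.Adj]
    (a b c d : Fin n → ℝ) (x0 : Fin n → Bool) : Set ℝ :=
  {0} ∪ Rcand G a b c d x0

lemma theta_mem {y : Fin n → Bool} (hmono : ∀ i, x0 i = true → y i = true)
    {p j q : Fin n} (hp : y p = false) (hj : j ∈ cn G p) (hjA : y j = true)
    (hq : q ∈ cn G p) (hqB : y q = false) :
    (pay G a b c d y q - pay G a b c d y j) / (G.degree j : ℝ)
      ∈ Rcand G a b c d x0 := by
  have hx0p : x0 p = false := by
    cases h : x0 p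
    · rfl
    · rw [hmono p h] at hp; cases hp
  have hx0q : x0 q = false := by
    cases h : x0 q
    · rfl
    · rw [hmono q h] at hqB; cases hqB
  have hjp : j ≠ p := by
    intro h
    rw [h, hp] at hjA
    cases hjA
  have hjnb : j ∈ G.neighborFinset p := by
    rcases Finset.mem_insert.1 hj with h | h
    · exact absurd h hjp
    · exact h
  exact ⟨p, hx0p, j, hjnb, q, hq, hx0q, pay G a b c d y q,
    pay_mem_PiB G a b c d x0 hmono hqB hx0q, pay G a b c d y j,
    pay_mem_PiA G a b c d x0 hmono hjA, rfl⟩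

lemma degree_pos_of_mem_cn {p j : Fin n} (hj : j ∈ cn G p) (hjp : j ≠ p) :
    (0 : ℝ) < (G.degree j : ℝ) := by
  have hjnb : j ∈ G.neighborFinset p := by
    rcases Finset.mem_insert.1 hj with h | h
    · exact absurd h hjp
    · exact h
  have hadj : G.Adj p j := (SimpleGraph.mem_neighborFinset G p j).1 hjnb
  have : p ∈ G.neighborFinset j := (SimpleGraph.mem_neighborFinset G j p).2 hadj.symm
  have hpos : 0 < G.degree j := Finset.card_pos.2 ⟨p, this⟩
  exact_mod_cast hpos

lemma imNext_congr (hopp : OppCoord a b c d) {r1 r2 : ℝ}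
    (hH : ∀ θ ∈ Ccand G a b c d x0, (θ < r1 ↔ θ < r2))
    {y : Fin n → Bool} (h1 : InvP G a b c d x0 r1 y) (h2 : InvP G a b c d x0 r2 y)
    (p : Fin n) :
    imNext G (payR G a b c d r1 y) y p = imNext G (payR G a b c d r2 y) y p := by
  by_cases hp : y p = true
  · rw [imNext_A G hp (h1.2 p hp), imNext_A G hp (h2.2 p hp)]
  · have hp' : y p = false := by cases h : y p; rfl; exact absurd h hp
    have key : ∀ j q : Fin n, j ∈ cn G p → y j = true → q ∈ cn G p → y q = false →
        ((payR G a b c d r1 y q < payR G a b c d r1 y j)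
          ↔ (payR G a b c d r2 y q < payR G a b c d r2 y j)) := by
      intro j q hj hjA hq hqB
      rw [payR_B G a b c d hqB, payR_A G a b c d hjA,
        payR_B G a b c d hqB, payR_A G a b c d hjA]
      have hjp : j ≠ p := by
        intro h
        rw [h, hp'] at hjA
        cases hjA
      have hpos := degree_pos_of_mem_cn G hj hjp
      have hθ := hH _ (Or.inr (theta_mem G a b c d x0 h1.1 hp' hj hjA hq hqB))
      rw [div_lt_iff₀ hpos, div_lt_iff₀ hpos] at hθ
      constructor
      · intro h
        have := hθ.1 (by linarith)
        linarith
      · intro h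
        have := hθ.2 (by linarith)
        linarith
    have iff1 : (imNext G (payR G a b c d r1 y) y p = true)
        ↔ (imNext G (payR G a b c d r2 y) y p = true) := by
      rw [imNext_B_iff G hp', imNext_B_iff G hp',
        smset_true_iff G hp', smset_true_iff G hp']
      constructor
      · rintro ⟨j, hj, hjA, hs⟩
        exact ⟨j, hj, hjA, fun q hq hqB => (key j q hj hjA hq hqB).1 (hs q hq hqB)⟩
      · rintro ⟨j, hj, hjA, hs⟩
        exact ⟨j, hj, hjA, fun q hq hqB => (key j q hj hjA hq hqB).2 (hs q hq hqB)⟩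
    cases hl : imNext G (payR G a b c d r1 y) y p
    · cases hr2 : imNext G (payR G a b c d r2 y) y p
      · rfl
      · rw [iff1.2 hr2] at hl; cases hl
    · rw [iff1.1 hl]

/-- The convergence property at reward `r`. -/
def Qp {n : ℕ} (G : SimpleGraph (Fin n)) [DecidableRel G.Adj]
    (a b c d : Fin n → ℝ) (x0 : Fin n → Bool) (r : ℝ) : Prop :=
  ∀ (σ : ℕ → Fin n) (x : ℕ → Fin n → Bool),
    InfAct σ → ImTraj G a b c d r σ x → x 0 = x0 → ∃ k, ∀ i, x k i = true

lemma q_transfer (hopp : OppCoord a b c d) (heq : ImEquilib G a b c d x0)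
    {r1 r2 : ℝ} (h1 : 0 ≤ r1) (h2 : 0 ≤ r2)
    (hH : ∀ θ ∈ Ccand G a b c d x0, (θ < r1 ↔ θ < r2))
    (hQ2 : Qp G a b c d x0 r2) : Qp G a b c d x0 r1 := by
  intro σ x hσ htraj hx0
  have hsteps2 : ∀ k j, x (k + 1) j
      = if j = σ k then imNext G (payR G a b c d r2 (x k)) (x k) j else x k j := by
    intro k
    induction k using Nat.strong_induction_on with
    | _ k ih =>
      have hinv2 : InvP G a b c d x0 r2 (x k) :=
        inv_prefix G a b c d x0 hopp h2 heq σ x hx0 k (fun k' hk' j => ih k' hk' j)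
      have hinv1 : InvP G a b c d x0 r1 (x k) :=
        inv_prefix G a b c d x0 hopp h1 heq σ x hx0 k (fun k' _ j => htraj k' j)
      intro j
      rw [htraj k j]
      by_cases hj : j = σ k
      · rw [if_pos hj, if_pos hj]
        exact imNext_congr G a b c d x0 hopp hH hinv1 hinv2 j
      · rw [if_neg hj, if_neg hj]
  exact hQ2 σ x hσ hsteps2 hx0

lemma piA_finite (i : Fin n) : (PiA G a b x0 i).Finite := by
  apply Set.Finite.subset
    ((Set.finite_Iic (G.degree i - nA G x0 i)).image
      (fun δ : ℕ => a i * ((nA G x0 i + δ : ℕ) : ℝ)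
        + b i * ((G.degree i - nA G x0 i - δ : ℕ) : ℝ)))
  rintro v ⟨δ, hδ, rfl⟩
  exact ⟨δ, Set.mem_Iic.2 hδ, rfl⟩

lemma piB_finite (i : Fin n) : (PiB G c d x0 i).Finite := by
  apply Set.Finite.subset
    ((Set.finite_Iic (G.degree i - nA G x0 i)).image
      (fun δ : ℕ => c i * ((nA G x0 i + δ : ℕ) : ℝ)
        + d i * ((G.degree i - nA G x0 i - δ : ℕ) : ℝ)))
  rintro v ⟨δ, hδ, rfl⟩
  exact ⟨δ, Set.mem_Iic.2 hδ, rfl⟩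

lemma rcand_finite : (Rcand G a b c d x0).Finite := by
  apply Set.Finite.subset
    (s := ⋃ (j : Fin n), ⋃ (i : Fin n),
      (fun pq : ℝ × ℝ => (pq.1 - pq.2) / (G.degree j : ℝ)) ''
        ((PiB G c d x0 i) ×ˢ (PiA G a b x0 j)))
  · apply Set.finite_iUnion
    intro j
    apply Set.finite_iUnion
    intro i
    exact ((piB_finite G c d x0 i).prod (piA_finite G a b x0 j)).image _
  · rintro v ⟨s, _, j, _, i, _, _, yB, hyB, yA, hyA, rfl⟩
    exact Set.mem_iUnion.2 ⟨j, Set.mem_iUnion.2 ⟨i, ⟨(yB, yA), ⟨hyB, hyA⟩, rfl⟩⟩⟩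

lemma ccand_finite : (Ccand G a b c d x0).Finite :=
  (Set.finite_singleton 0).union (rcand_finite G a b c d x0)

end Aux

/-- For a network of opponent-coordinating agents at equilibrium with
`x0 ≠ all-B`, the infimum uniform reward `r₀*` (such that every reward `r₀ > r₀*` drives
the network to all-A) belongs to the finite candidate set `ℛ`. -/
theorem stmt10 {n : ℕ} (G : SimpleGraph (Fin n)) [DecidableRel G.Adj]
    (a b c d : Fin n → ℝ) (hopp : OppCoord a b c d)
    (x0 : Fin n → Bool) (heq : ImEquilib G a b c d x0)
    (hne : ∃ s, x0 s = true) :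
    sInf {r : ℝ | 0 ≤ r ∧ ∀ r', r < r' →
        ∀ (σ : ℕ → Fin n) (x : ℕ → Fin n → Bool),
          InfAct σ → ImTraj G a b c d r' σ x → x 0 = x0 →
            ∃ k, ∀ i, x k i = true} ∈
      ({0} ∪ {v : ℝ | ∃ s : Fin n, x0 s = false ∧
        ∃ j ∈ G.neighborFinset s, ∃ i ∈ cn G s, x0 i = false ∧
          ∃ yB ∈ PiB G c d x0 i, ∃ yA ∈ PiA G a b x0 j,
            v = (yB - yA) / (G.degree j : ℝ)} : Set ℝ) := by
  classical
  set S : Set ℝ := {r : ℝ | 0 ≤ r ∧ ∀ r', r < r' →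
        ∀ (σ : ℕ → Fin n) (x : ℕ → Fin n → Bool),
          InfAct σ → ImTraj G a b c d r' σ x → x 0 = x0 →
            ∃ k, ∀ i, x k i = true} with hSdef
  show sInf S ∈ Ccand G a b c d x0
  by_cases hS : S.Nonempty
  swap
  · rw [Set.not_nonempty_iff_eq_empty.1 hS, Real.sInf_empty]
    exact Set.mem_union_left _ rfl
  have hbdd : BddBelow S := ⟨0, fun r hr => hr.1⟩
  have ht0 : (0 : ℝ) ≤ sInf S := le_csInf hS (fun r hr => hr.1)
  set t := sInf S with htdef
  by_cases htC : t ∈ Ccand G a b c d x0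
  · exact htC
  exfalso
  have htpos : 0 < t := by
    rcases lt_or_eq_of_le ht0 with h | h
    · exact h
    · exact absurd (Set.mem_union_left _ (Set.mem_singleton_iff.2 h.symm)) htC
  have hQab : ∀ r', t < r' → Qp G a b c d x0 r' := by
    intro r' hr'
    obtain ⟨s, hsS, hs⟩ := (csInf_lt_iff hbdd hS).1 hr'
    exact hsS.2 r' hs
  have hCfin := ccand_finite G a b c d x0
  have hfin1 : (Ccand G a b c d x0 ∩ Set.Iio t).Finite := hCfin.inter_of_left _
  have hne1 : hfin1.toFinset.Nonempty := by
    refine ⟨0, ?_⟩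
    rw [Set.Finite.mem_toFinset]
    exact ⟨Set.mem_union_left _ rfl, htpos⟩
  set cmax := hfin1.toFinset.max' hne1 with hcmaxdef
  have hcmem : cmax ∈ Ccand G a b c d x0 ∧ cmax < t := by
    have := hfin1.toFinset.max'_mem hne1
    rw [Set.Finite.mem_toFinset] at this
    exact this
  have hcub : ∀ θ ∈ Ccand G a b c d x0, θ < t → θ ≤ cmax := by
    intro θ h1 h2
    apply hfin1.toFinset.le_max'
    rw [Set.Finite.mem_toFinset]
    exact ⟨h1, h2⟩
  have hc0 : (0 : ℝ) ≤ cmax := hcub 0 (Set.mem_union_left _ rfl) htpos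
  have hfin2 : (Ccand G a b c d x0 ∩ Set.Ioi t).Finite := hCfin.inter_of_left _
  obtain ⟨t'', ht''1, ht''2⟩ :
      ∃ t'', t < t'' ∧ ∀ θ ∈ Ccand G a b c d x0, t < θ → t'' ≤ θ := by
    by_cases hne2 : hfin2.toFinset.Nonempty
    · set cm := hfin2.toFinset.min' hne2 with hcmdef
      have h1 : cm ∈ Ccand G a b c d x0 ∧ t < cm := by
        have := hfin2.toFinset.min'_mem hne2
        rw [Set.Finite.mem_toFinset] at this
        exact this
      refine ⟨(t + cm) / 2, by linarith [h1.2], fun θ hθ htθ => ?_⟩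
      have hcmθ : cm ≤ θ := by
        apply hfin2.toFinset.min'_le
        rw [Set.Finite.mem_toFinset]
        exact ⟨hθ, htθ⟩
      linarith [h1.2]
    · refine ⟨t + 1, by linarith, fun θ hθ htθ => absurd ?_ hne2⟩
      refine ⟨θ, ?_⟩
      rw [Set.Finite.mem_toFinset]
      exact ⟨hθ, htθ⟩
  set m := (cmax + t) / 2 with hmdef
  have hcm : cmax < m := by rw [hmdef]; linarith [hcmem.2]
  have hmt : m < t := by rw [hmdef]; linarith [hcmem.2]
  have hmS : m ∈ S := by
    rw [hSdef]
    refine ⟨by linarith, ?_⟩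
    intro r' hmr'
    by_cases hcase : t < r'
    · exact hQab r' hcase
    · push_neg at hcase
      refine q_transfer G a b c d x0 hopp heq (r1 := r') (r2 := t'')
        (by linarith) (by linarith) ?_ (hQab t'' ht''1)
      intro θ hθ
      by_cases hθt : θ < t
      · have hθc := hcub θ hθ hθt
        have e1 : θ < r' := by linarith
        have e2 : θ < t'' := by linarith
        simp [e1, e2]
      · push_neg at hθt
        have hlt : t < θ := lt_of_le_of_ne hθt (fun h => htC (h ▸ hθ))
        have e1 : ¬ θ < r' := by linarith
        have e2 : ¬ θ < t'' := by
          have := ht''2 θ hθ hlt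
          linarith
        simp [e1, e2]
  have hle : t ≤ m := csInf_le hbdd hmS
  linarith
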